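/- Let x̄¹,…,x̄^{N−1} and ȳ¹,…,ȳ^N be finite tuples of complex numbers with |x̄^j| = |ȳ^j| for 1 ≤ j ≤ N−1. Then the rational enlarged rectangular partition function factorizes as K(x̄¹,…,x̄^{N−1} | ȳ¹,…,ȳ^N) = Π_{j=1}^{N−1}(x̄^j − ȳ^N + h) · H(x̄¹,…,x̄^{N−1} | ȳ¹,…,ȳ^{N−1}). -/

import Mathlib

open scoped BigOperators

noncomputable section

namespace MultComm

/-- Entries of the trigonometric R-matrix: row `p = (k,ℓ)`, column `c = (i,j)`,
so that `R e_i ⊗ e_j = ∑ [R]_{ij}^{kℓ} e_k ⊗ e_ℓ`. -/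
def Rtrig (N : ℕ) (q : ℂ) (u v : ℂ) : Matrix (Fin N × Fin N) (Fin N × Fin N) ℂ :=
  Matrix.of fun p c =>
    if p = c then (if c.1 = c.2 then q * u - q⁻¹ * v else u - v)
    else if p.1 = c.2 ∧ p.2 = c.1 then
      (if (p.1 : ℕ) < (p.2 : ℕ) then (q - q⁻¹) * v else (q - q⁻¹) * u)
    else 0

/-- The second trigonometric R-matrix convention. -/
def Rtrig2 (N : ℕ) (q : ℂ) (u v : ℂ) : Matrix (Fin N × Fin N) (Fin N × Fin N) ℂ :=
  Matrix.of fun p c =>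
    if p = c then (if c.1 = c.2 then q * u - q⁻¹ * v else u - v)
    else if p.1 = c.2 ∧ p.2 = c.1 then
      (if (p.1 : ℕ) < (p.2 : ℕ) then (q - q⁻¹) * u else (q - q⁻¹) * v)
    else 0

/-- The rational R-matrix. -/
def Rrat (N : ℕ) (h : ℂ) (x y : ℂ) : Matrix (Fin N × Fin N) (Fin N × Fin N) ℂ :=
  Matrix.of fun p c =>
    if p = c then (if c.1 = c.2 then x - y + h else x - y)
    else if p.1 = c.2 ∧ p.2 = c.1 then h
    else 0

/-- An R-matrix acting in the auxiliary space `0` and the `k`-th quantum space. -/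
def Raux (N n : ℕ) (Rm : Matrix (Fin N × Fin N) (Fin N × Fin N) ℂ) (k : Fin n) :
    Matrix (Fin N × (Fin n → Fin N)) (Fin N × (Fin n → Fin N)) ℂ :=
  Matrix.of fun p c =>
    if (∀ j, j ≠ k → p.2 j = c.2 j) then Rm (p.1, p.2 k) (c.1, c.2 k) else 0

/-- The monodromy matrix `T^vect(u; ξ) = R_{0n}(u,ξ_n) ⋯ R_{01}(u,ξ_1)`. -/
def Tmon (N n : ℕ) (Rm : ℂ → ℂ → Matrix (Fin N × Fin N) (Fin N × Fin N) ℂ)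
    (u : ℂ) (ξ : Fin n → ℂ) :
    Matrix (Fin N × (Fin n → Fin N)) (Fin N × (Fin n → Fin N)) ℂ :=
  (((List.finRange n).reverse).map (fun k => Raux N n (Rm u (ξ k)) k)).prod

/-- The entry `T_{ij}(u; ξ)`, an operator on the quantum spaces. -/
def Tent (N n : ℕ) (Rm : ℂ → ℂ → Matrix (Fin N × Fin N) (Fin N × Fin N) ℂ)
    (i j : Fin N) (u : ℂ) (ξ : Fin n → ℂ) :
    Matrix (Fin n → Fin N) (Fin n → Fin N) ℂ :=
  Matrix.of fun f g => Tmon N n Rm u ξ (i, f) (j, g)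

/-- Product of the (commuting) entries `T_{ij}(u;ξ)` over a list of spectral parameters. -/
def TentL (N n : ℕ) (Rm : ℂ → ℂ → Matrix (Fin N × Fin N) (Fin N × Fin N) ℂ)
    (i j : Fin N) (l : List ℂ) (ξ : Fin n → ℂ) :
    Matrix (Fin n → Fin N) (Fin n → Fin N) ℂ :=
  (l.map (fun u => Tent N n Rm i j u ξ)).prod

/-- Product of the entries `T_{ij}(w_k;ξ)` over a finite index set. -/
def TentS (N n : ℕ) (Rm : ℂ → ℂ → Matrix (Fin N × Fin N) (Fin N × Fin N) ℂ)
    (i j : Fin N) (w : Fin n → ℂ) (s : Finset (Fin n)) (ξ : Fin n → ℂ) :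
    Matrix (Fin n → Fin N) (Fin n → Fin N) ℂ :=
  TentL N n Rm i j (s.toList.map w) ξ

/-- The basis vector `e_{f}` of `V^{⊗ n}`. -/
def bvec (N n : ℕ) (f : Fin n → Fin N) : (Fin n → Fin N) → ℂ :=
  fun g => if g = f then 1 else 0

/-- The RTT relation for an `N×N` matrix of generators over an algebra `A`. -/
def RTT (N : ℕ) (Rm : ℂ → ℂ → Matrix (Fin N × Fin N) (Fin N × Fin N) ℂ)
    (A : Type*) [Ring A] [Algebra ℂ A] (D : Finset ℂ)
    (T : ℂ → Fin N → Fin N → A) : Prop :=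
  ∀ u ∈ D, ∀ v ∈ D, ∀ i j k l : Fin N,
    (∑ a : Fin N, ∑ b : Fin N, Rm u v (i, j) (a, b) • (T u a k * T v b l)) =
    (∑ a : Fin N, ∑ b : Fin N, Rm u v (a, b) (k, l) • (T v j b * T u i a))

/-- Ordered product of generators over a finite index set. -/
def Aprod {A : Type*} [Monoid A] {n : ℕ} (f : ℂ → A) (w : Fin n → ℂ)
    (s : Finset (Fin n)) : A :=
  (s.toList.map (fun k => f (w k))).prod

/-- Pair product `∏_{a∈s} ∏_{b∈t} (α w_a - β w_b + γ)`. -/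
def wpair {n : ℕ} (w : Fin n → ℂ) (s t : Finset (Fin n)) (α β γ : ℂ) : ℂ :=
  ∏ a ∈ s, ∏ b ∈ t, (α * w a - β * w b + γ)

/-- The 1-based block of a colouring. -/
def blk {n N : ℕ} (c : Fin n → Fin N) (j : ℕ) : Finset (Fin n) :=
  Finset.univ.filter (fun k => (c k : ℕ) + 1 = j)

/-- The block of a colouring with a given colour. -/
def blkF {n N : ℕ} (c : Fin n → Fin N) (j : Fin N) : Finset (Fin n) :=
  Finset.univ.filter (fun k => c k = j)

/-- One layer of the trigonometric weight function. -/
def layerT (q : ℂ) {m l : ℕ} (x : Fin m → ℂ) (y : Fin l → ℂ) : ℂ :=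
  (∏ a : Fin m,
      ((∏ i ∈ Finset.univ.filter (fun i : Fin l => (i : ℕ) < (a : ℕ)), (x a - y i))
        * ((q - q⁻¹) * x a)
        * ∏ i ∈ Finset.univ.filter (fun i : Fin l => (a : ℕ) < (i : ℕ)),
            (q * x a - q⁻¹ * y i)))
    * ∏ a : Fin m, ∏ b ∈ Finset.univ.filter (fun b : Fin m => (a : ℕ) < (b : ℕ)),
        ((q⁻¹ * x a - q * x b) / (x a - x b))

/-- One layer of the rational weight function. -/
def layerR (h : ℂ) {m l : ℕ} (x : Fin m → ℂ) (y : Fin l → ℂ) : ℂ :=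
  (∏ a : Fin m,
      ((∏ i ∈ Finset.univ.filter (fun i : Fin l => (i : ℕ) < (a : ℕ)), (x a - y i))
        * h
        * ∏ i ∈ Finset.univ.filter (fun i : Fin l => (a : ℕ) < (i : ℕ)),
            (x a - y i + h)))
    * ∏ a : Fin m, ∏ b ∈ Finset.univ.filter (fun b : Fin m => (a : ℕ) < (b : ℕ)),
        ((x a - x b - h) / (x a - x b))

/-- The specialised trigonometric weight function for the colour sequence
`(1^{k_1}, 2^{k_2-k_1}, …, N^{L-k_{N-1}})`. -/
def Wtrig (q : ℂ) (M : ℕ) (k : Fin M → ℕ) (L : ℕ)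
    (U : (p : Fin M) → Fin (k p) → ℂ) (V : Fin L → ℂ) : ℂ :=
  ∑ σ : ((p : Fin M) → Equiv.Perm (Fin (k p))),
    ∏ p : Fin M,
      if h : (p : ℕ) + 1 < M then
        layerT q (fun a => U p (σ p a))
          (fun i => U ⟨(p : ℕ) + 1, h⟩ (σ ⟨(p : ℕ) + 1, h⟩ i))
      else
        layerT q (fun a => U p (σ p a)) V

/-- The specialised rational weight function. -/
def Wrat (h : ℂ) (M : ℕ) (k : Fin M → ℕ) (L : ℕ)
    (U : (p : Fin M) → Fin (k p) → ℂ) (V : Fin L → ℂ) : ℂ :=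
  ∑ σ : ((p : Fin M) → Equiv.Perm (Fin (k p))),
    ∏ p : Fin M,
      if hp : (p : ℕ) + 1 < M then
        layerR h (fun a => U p (σ p a))
          (fun i => U ⟨(p : ℕ) + 1, hp⟩ (σ ⟨(p : ℕ) + 1, hp⟩ i))
      else
        layerR h (fun a => U p (σ p a)) V

/-- The trigonometric Izergin–Korepin determinant. -/
def IKtrig (q : ℂ) {m : ℕ} (u v : Fin m → ℂ) : ℂ :=
  (∏ i : Fin m, ∏ j ∈ Finset.univ.filter (fun j : Fin m => i < j),
      ((u i - u j) * (v j - v i)))⁻¹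
    * Matrix.det (Matrix.of fun i j : Fin m =>
        (q - q⁻¹) * u i *
          ∏ k ∈ Finset.univ.filter (fun k : Fin m => k ≠ j),
            ((q * u i - q⁻¹ * v k) * (u i - v k)))

/-- The rational Izergin–Korepin determinant. -/
def IKrat (h : ℂ) {m : ℕ} (x y : Fin m → ℂ) : ℂ :=
  (∏ i : Fin m, ∏ j ∈ Finset.univ.filter (fun j : Fin m => i < j),
      ((x i - x j) * (y j - y i)))⁻¹
    * Matrix.det (Matrix.of fun i j : Fin m =>
        h * ∏ k ∈ Finset.univ.filter (fun k : Fin m => k ≠ j),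
            ((x i - y k + h) * (x i - y k)))

/-- The number of inversions of a permutation of `Fin r`. -/
def invCount {r : ℕ} (σ : Equiv.Perm (Fin r)) : ℕ :=
  (Finset.univ.filter (fun p : Fin r × Fin r => p.1 < p.2 ∧ σ p.2 < σ p.1)).card

/-- The quantum determinant `qdet T^{(r)}(u)` in the vector representation. -/
def qdetT (N n : ℕ) (q : ℂ) (w : Fin n → ℂ) (r : ℕ) (hr : r ≤ N) (u : ℂ) :
    Matrix (Fin n → Fin N) (Fin n → Fin N) ℂ :=
  ∑ σ : Equiv.Perm (Fin r),
    ((-q) ^ (-(invCount σ : ℤ))) •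
      (((List.finRange r).reverse.map
          (fun i => Tent N n (Rtrig N q) (Fin.castLE hr i) (Fin.castLE hr (σ i))
            (q ^ (2 * (i : ℕ)) * u) w)).prod)

end MultComm

/-! In `T(x) = R_{0,n'+nN}(x, ξ_{n'+nN}) ⋯ R_{01}(x, ξ_1)` the factors of the last `nN` sites
stand leftmost, and on a covector of colour `N` in the auxiliary space and in those sites each of
them acts as the scalar `x - y_b + h`, since the `(N, N)` row of `R(x, y)` is `(x - y + h) e*_{NN}`.
What remains is the monodromy matrix of the first `n'` sites tensored with the identity, so in the
whole product of entries `T_{N,j}` the last `nN` sites stay frozen at colour `N` and contribute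
only the scalar factors. -/

theorem Matrix.row_list_prod_mul_of_row_eq_single {ι κ R : Type*} [Fintype κ] [DecidableEq κ]
    [CommSemiring R] (l : List ι) (A : ι → Matrix κ κ R) (s : ι → R) (p : κ)
    (hA : ∀ k ∈ l, A k p = Pi.single p (s k)) (Q : Matrix κ κ R) :
    ((l.map A).prod * Q) p = (l.map s).prod • Q p := by
  induction l with
  | nil => simp
  | cons k l ih =>
    funext c
    have hrow : (A k * ((l.map A).prod * Q)) p c = s k * ((l.map A).prod * Q) p c := by
      simp [Matrix.mul_apply, hA k List.mem_cons_self, Pi.single_apply]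
    rw [List.map_cons, List.prod_cons, Matrix.mul_assoc, hrow,
      ih fun k' hk' => hA k' (List.mem_cons_of_mem k hk')]
    simp [mul_assoc]

theorem Matrix.list_prod_apply_append_const {ι κ R : Type*} [Fintype κ] [DecidableEq κ]
    [CommSemiring R] {m n : ℕ} (c : κ) (l : List ι)
    (A : ι → Matrix (Fin (m + n) → κ) (Fin (m + n) → κ) R)
    (B : ι → Matrix (Fin m → κ) (Fin m → κ) R) (s : ι → R)
    (hA : ∀ k ∈ l, ∀ f g v, A k (Fin.append f fun _ => c) (Fin.append g v) =
      s k * if (fun _ => c) = v then B k f g else 0)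
    (f g : Fin m → κ) :
    (l.map A).prod (Fin.append f fun _ => c) (Fin.append g fun _ => c) =
      (l.map s).prod * (l.map B).prod f g := by
  induction l generalizing f with
  | nil =>
    have happend : Fin.append f (fun _ => c) = Fin.append g (fun _ : Fin n => c) ↔ f = g :=
      ⟨fun h => funext fun a => by simpa using congrFun h (Fin.castAdd n a), fun h => h ▸ rfl⟩
    simp [Matrix.one_apply, happend]
  | cons k l ih =>
    have hsum (F : (Fin (m + n) → κ) → R) :
        ∑ w, F w = ∑ u : Fin m → κ, ∑ v : Fin n → κ, F (Fin.append u v) := by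
      rw [← (Fin.appendEquiv m n).sum_comp, Fintype.sum_prod_type]
      rfl
    simp only [List.map_cons, List.prod_cons, Matrix.mul_apply, hsum,
      hA k List.mem_cons_self, ih fun k' hk' => hA k' (List.mem_cons_of_mem k hk'), mul_ite,
      ite_mul, mul_zero, zero_mul, Finset.sum_ite_eq, Finset.mem_univ, if_true, Finset.mul_sum]
    exact Finset.sum_congr rfl fun u _ => by ring

namespace MultComm

variable {N : ℕ}

def siteSplit (N m n : ℕ) :
    (Fin N × (Fin m → Fin N)) × (Fin n → Fin N) ≃ Fin N × (Fin (m + n) → Fin N) :=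
  (Equiv.prodAssoc _ _ _).trans (Equiv.prodCongr (Equiv.refl _) (Fin.appendEquiv m n))

/-- `A ↦ A ⊗ 1`: the identity on the `n` extra sites. -/
def extendSites (N m n : ℕ) :
    Matrix (Fin N × (Fin m → Fin N)) (Fin N × (Fin m → Fin N)) ℂ →+*
      Matrix (Fin N × (Fin (m + n) → Fin N)) (Fin N × (Fin (m + n) → Fin N)) ℂ :=
  (Matrix.reindexRingEquiv ℂ (siteSplit N m n)).toRingHom.comp
    ((Matrix.blockDiagonalRingHom _ _ ℂ).comp (Pi.constRingHom _ _))

theorem extendSites_apply {m n : ℕ}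
    (A : Matrix (Fin N × (Fin m → Fin N)) (Fin N × (Fin m → Fin N)) ℂ) (i j : Fin N)
    (f g : Fin m → Fin N) (u v : Fin n → Fin N) :
    extendSites N m n A (i, Fin.append f u) (j, Fin.append g v) =
      if u = v then A (i, f) (j, g) else 0 := by
  simp [extendSites, siteSplit, Matrix.blockDiagonal_apply]

theorem Raux_castAdd_apply {m n : ℕ} (M : Matrix (Fin N × Fin N) (Fin N × Fin N) ℂ) (k : Fin m)
    (i j : Fin N) (f g : Fin m → Fin N) (u v : Fin n → Fin N) :
    Raux N (m + n) M (Fin.castAdd n k) (i, Fin.append f u) (j, Fin.append g v) =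
      if u = v then Raux N m M k (i, f) (j, g) else 0 := by
  have hne (l : Fin n) : Fin.natAdd m l ≠ Fin.castAdd n k := by
    simp [Fin.ext_iff]; omega
  have hsites : (∀ l, l ≠ Fin.castAdd n k → Fin.append f u l = Fin.append g v l) ↔
      u = v ∧ ∀ l, l ≠ k → f l = g l := by
    rw [Fin.forall_fin_add, funext_iff, and_comm]
    simp [Fin.castAdd_inj, hne]
  simp only [Raux, Matrix.of_apply, hsites, ite_and, Fin.append_left]

theorem Raux_castAdd {m n : ℕ} (M : Matrix (Fin N × Fin N) (Fin N × Fin N) ℂ) (k : Fin m) :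
    Raux N (m + n) M (Fin.castAdd n k) = extendSites N m n (Raux N m M k) := by
  ext ⟨i, f⟩ ⟨j, g⟩
  rw [← Fin.append_castAdd_natAdd (f := f), ← Fin.append_castAdd_natAdd (f := g),
    Raux_castAdd_apply, extendSites_apply]

theorem Tmon_append {m n : ℕ} (Rm : ℂ → ℂ → Matrix (Fin N × Fin N) (Fin N × Fin N) ℂ) (x : ℂ)
    (ξ : Fin m → ℂ) (η : Fin n → ℂ) :
    Tmon N (m + n) Rm x (Fin.append ξ η) =
      ((List.finRange n).reverse.map fun b => Raux N (m + n) (Rm x (η b)) (Fin.natAdd m b)).prod *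
        extendSites N m n (Tmon N m Rm x ξ) := by
  rw [Tmon, Tmon, List.map_reverse, List.map_reverse, List.map_reverse, ← List.ofFn_eq_map,
    ← List.ofFn_eq_map, ← List.ofFn_eq_map, List.ofFn_add, List.reverse_append, List.prod_append,
    map_list_prod, List.map_reverse, List.map_ofFn]
  congr 3 <;> refine congrArg List.ofFn (funext fun k => ?_)
  · simp
  · show Raux N (m + n) (Rm x (Fin.append ξ η (Fin.castAdd n k))) (Fin.castAdd n k) = _
    rw [Fin.append_left, Raux_castAdd]
    rfl

theorem Rrat_row_self_eq_single (h x y : ℂ) (i : Fin N) :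
    Rrat N h x y (i, i) = Pi.single (i, i) (x - y + h) := by
  funext c
  by_cases hc : c = (i, i)
  · simp [Rrat, hc]
  · have hswap : ¬(i = c.2 ∧ i = c.1) := fun h' => hc (Prod.ext h'.2.symm h'.1.symm)
    simp [Rrat, hc, Ne.symm hc, hswap]

theorem Raux_row_eq_single_of_row_eq_single {n : ℕ} (M : Matrix (Fin N × Fin N) (Fin N × Fin N) ℂ)
    (s : ℂ) (i : Fin N) (hM : M (i, i) = Pi.single (i, i) s) (k : Fin n) (f : Fin n → Fin N)
    (hf : f k = i) : Raux N n M k (i, f) = Pi.single (i, f) s := by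
  funext ⟨j, g⟩
  by_cases hg : (j, g) = (i, f)
  · simp [Raux, hf, hM, hg]
  · simp only [Raux, Matrix.of_apply, hf, hM, Pi.single_apply, hg, if_false]
    split_ifs with hrest hsingle
    · obtain ⟨rfl, hgk⟩ := Prod.mk.inj hsingle
      have hgf : g = f := funext fun l => by
        by_cases hl : l = k
        · rw [hl, hf, hgk]
        · exact (hrest l hl).symm
      exact absurd (by rw [hgf]) hg
    all_goals rfl

theorem Tent_append_apply {m n : ℕ} (h x : ℂ) (ξ : Fin m → ℂ) (η : Fin n → ℂ) (i j : Fin N)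
    (f g : Fin m → Fin N) (v : Fin n → Fin N) :
    Tent N (m + n) (Rrat N h) i j x (Fin.append ξ η) (Fin.append f fun _ => i) (Fin.append g v) =
      (∏ b, (x - η b + h)) * if (fun _ => i) = v then Tent N m (Rrat N h) i j x ξ f g else 0 := by
  have hrow (b : Fin n) :
      Raux N (m + n) (Rrat N h x (η b)) (Fin.natAdd m b) (i, Fin.append f fun _ => i) =
        Pi.single (i, Fin.append f fun _ => i) (x - η b + h) :=
    Raux_row_eq_single_of_row_eq_single _ _ i (Rrat_row_self_eq_single h x (η b) i) _ _
      (Fin.append_right _ _ _)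
  have hscalar :
      ((List.finRange n).reverse.map fun b => x - η b + h).prod = ∏ b, (x - η b + h) := by
    rw [List.map_reverse, List.prod_reverse, Fin.prod_univ_def]
  simp only [Tent, Matrix.of_apply]
  rw [Tmon_append, Matrix.row_list_prod_mul_of_row_eq_single _ _ _ _ (fun b _ => hrow b),
    Pi.smul_apply, hscalar, extendSites_apply, smul_eq_mul]

end MultComm

open MultComm in
/-- The rational enlarged rectangular partition function `K` factorises
as an explicit product times the rational rectangular partition function `H`. -/
theorem K_eq_factor_mul_H_rational
    (N : ℕ) (hN : 2 ≤ N) (h : ℂ)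
    (n' nN : ℕ)
    (xval : Fin n' → ℂ) (col : Fin n' → Fin (N - 1))
    (ξ : Fin n' → ℂ) (yN : Fin nN → ℂ) :
    (((List.finRange n').map (fun i =>
        Tent N (n' + nN) (Rrat N h)
          ⟨N - 1, by omega⟩ (Fin.castLE (by omega) (col i))
          (xval i) (Fin.append ξ yN))).prod)
      (Fin.append (fun i => Fin.castLE (by omega) (col i)) (fun _ => ⟨N - 1, by omega⟩))
      (fun _ => ⟨N - 1, by omega⟩)
      =
    (∏ i : Fin n', ∏ b : Fin nN, (xval i - yN b + h))
      * (((List.finRange n').map (fun i =>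
            Tent N n' (Rrat N h)
              ⟨N - 1, by omega⟩ (Fin.castLE (by omega) (col i))
              (xval i) ξ)).prod)
          (fun i => Fin.castLE (by omega) (col i)) (fun _ => ⟨N - 1, by omega⟩) := by
  have hconst : (fun _ : Fin (n' + nN) => (⟨N - 1, by omega⟩ : Fin N)) =
      Fin.append (fun _ => ⟨N - 1, by omega⟩) (fun _ => ⟨N - 1, by omega⟩) := by
    funext l
    cases l using Fin.addCases <;> simp
  rw [hconst, Fin.prod_univ_def]
  exact Matrix.list_prod_apply_append_const _ _ _ _ _
    (fun i _ f g v => Tent_append_apply h (xval i) ξ yN _ _ f g v) _ _
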